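/- Let δ > 0, for each player i let D_i^δ be a Martin function for the minmax value, and let σ* be a strategy profile such that σ*(h) is a Nash equilibrium of the one-shot game G_O(D^δ,h) for every history h. Then for every history h ∈ H, every player i ∈ I, and every action a_i ∈ A_i: Σ_{a_{-i}∈A_{-i}} σ*_{-i}(a_{-i} | h) · Σ_{s∈S} p(s | s_h, a_i, a_{-i}) · v̄_i(h, (a_i,a_{-i}), s) ≤ E_{h,σ*}[f_i] + 2δ. (In words: a one-stage deviation to any action, followed by receiving the minmax value at the resulting history, yields at most the on-path payoff plus 2δ.) -/

import Mathlib

open scoped ENNReal NNReal Classical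

/-- A multiplayer stochastic game: a nonempty finite set of players `I`, a nonempty
countable set of states `S`, nonempty finite action sets `A i`, a transition function
`trans` and bounded Borel payoff functions `payoff i` on runs. -/
structure StochGame where
  I : Type
  S : Type
  A : I → Type
  [fintypeI : Fintype I]
  [nonemptyI : Nonempty I]
  [countableS : Countable S]
  [nonemptyS : Nonempty S]
  [fintypeA : ∀ i, Fintype (A i)]
  [nonemptyA : ∀ i, Nonempty (A i)]
  trans : S → (∀ i, A i) → PMF S
  payoff : I → S × (ℕ → (∀ i, A i) × S) → ℝ

open MeasureTheory

attribute [instance] StochGame.fintypeI StochGame.nonemptyI StochGame.countableS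
  StochGame.nonemptyS StochGame.fintypeA StochGame.nonemptyA

namespace StochGame

variable (G : StochGame)

noncomputable instance : DecidableEq G.I := Classical.decEq _

noncomputable instance (i : G.I) : DecidableEq (G.A i) := Classical.decEq _

/-- Action profiles. -/
abbrev ActionProfile := ∀ i, G.A i

/-- Runs `(s¹,a¹,s²,a²,…)`, encoded as an initial state together with a sequence of
(action profile, next state) pairs. -/
abbrev Run := G.S × (ℕ → G.ActionProfile × G.S)

/-- Histories `(s¹,a¹,…,s^n)`, encoded as an initial state together with a finite list of
(action profile, next state) pairs. -/
abbrev History := G.S × List (G.ActionProfile × G.S)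

instance : MeasurableSpace G.S := ⊤
instance : MeasurableSpace G.ActionProfile := ⊤

variable {G}

/-- The final state `s_h` of a history. -/
def lastState (h : G.History) : G.S := h.2.getLast?.elim h.1 Prod.snd

/-- The stage (length) of a history: a history `(s¹,a¹,…,s^n)` is in stage `n`. -/
def stage (h : G.History) : ℕ := h.2.length + 1

/-- The history obtained by appending one action profile and one state. -/
def snocH (h : G.History) (a : G.ActionProfile) (s : G.S) : G.History :=
  (h.1, h.2 ++ [(a, s)])

/-- The history obtained by appending a finite list of (action profile, state) pairs. -/
def catH (h : G.History) (l : List (G.ActionProfile × G.S)) : G.History := (h.1, h.2 ++ l)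

/-- The history in stage 1 consisting of the initial state `s` only. -/
def initH (G : StochGame) (s : G.S) : G.History := (s, [])

/-- All transitions along the list have positive probability when starting from `s`. -/
def ValidFrom (G : StochGame) : G.S → List (G.ActionProfile × G.S) → Prop
  | _, [] => True
  | s, (a, t) :: l => G.trans s a t ≠ 0 ∧ ValidFrom G t l

/-- A history belongs to the set `H` of histories of the game iff all its transitions have
positive probability. -/
def Valid (h : G.History) : Prop := ValidFrom G h.1 h.2

/-- `Ext h h'` means that the history `h'` extends the history `h` (possibly `h = h'`),
written `h ⪯ h'` in the paper. -/
def Ext (h h' : G.History) : Prop := h.1 = h'.1 ∧ h.2 <+: h'.2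

/-- A behavior strategy of player `i`: a mixed action at every history. -/
abbrev Strategy (G : StochGame) (i : G.I) := G.History → PMF (G.A i)

/-- A strategy profile: one behavior strategy for each player. -/
abbrev Profile (G : StochGame) := ∀ i, G.Strategy i

/-- The probability, under the strategy profile `σ`, that after the history `h` play continues
exactly along the finite continuation `l`. -/
noncomputable def contProb (σ : G.Profile) : G.History → List (G.ActionProfile × G.S) → ℝ≥0∞
  | _, [] => 1
  | h, (a, s) :: l =>
      (∏ i, σ i h (a i)) * G.trans (lastState h) a s * contProb σ (snocH h a s) l

/-- The cylinder set `C(h)` of all runs extending the history `h`. -/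
def cyl (h : G.History) : Set G.Run :=
  {r | r.1 = h.1 ∧ ∀ k, (hk : k < h.2.length) → r.2 k = h.2.get ⟨k, hk⟩}

/-- `P` is the family of probability measures `P_{h,σ}` on runs induced, via the
Ionescu-Tulcea/Kolmogorov extension, by a history `h` and a strategy profile `σ`:
each `P h σ` is a probability measure, and the measure of the cylinder set of any finite
extension of `h` is the product of the transition probabilities prescribed by `σ` and `p`.
(These properties determine `P h σ` uniquely, since `P h σ (cyl h) = 1`.) -/
def IsInducedFamily (G : StochGame) (P : G.History → G.Profile → Measure G.Run) : Prop :=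
  (∀ h σ, IsProbabilityMeasure (P h σ)) ∧
    ∀ (h : G.History) (σ : G.Profile) (l : List (G.ActionProfile × G.S)),
      P h σ (cyl (catH h l)) = contProb σ h l

/-- The expected payoff `E_{h,σ}[f_i]` of player `i` in the subgame at `h` under `σ`. -/
noncomputable def expPay (P : G.History → G.Profile → Measure G.Run) (h : G.History)
    (σ : G.Profile) (i : G.I) : ℝ :=
  ∫ r, G.payoff i r ∂(P h σ)

/-- The minmax value `v̄_i(h)` of player `i` at the history `h`. -/
noncomputable def minmaxVal (P : G.History → G.Profile → Measure G.Run) (i : G.I)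
    (h : G.History) : ℝ :=
  ⨅ σ : G.Profile, ⨆ τ : G.Strategy i, expPay P h (Function.update σ i τ) i

/-- The maxmin value `v̲_i(h)` of player `i` at the history `h`. -/
noncomputable def maxminVal (P : G.History → G.Profile → Measure G.Run) (i : G.I)
    (h : G.History) : ℝ :=
  ⨆ τ : G.Strategy i, ⨅ σ : G.Profile, expPay P h (Function.update σ i τ) i

/-- `E[D | h, x]`: the expected value of `D` at the next history, when at history `h` the
players use the mixed action profile `x` and the next state is drawn according to `p`. -/
noncomputable def oneShotExp (D : G.History → ℝ) (h : G.History) (x : ∀ i, PMF (G.A i)) : ℝ :=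
  ∑ a : G.ActionProfile, (∏ i, (x i (a i)).toReal) *
    ∑' s : G.S, (G.trans (lastState h) a s).toReal * D (snocH h a s)

/-- The minmax value `v̄_{O,i}(D,h)` of player `i` in the one-shot game `G_O(D,h)`. -/
noncomputable def oneShotMinmax (D : G.History → ℝ) (i : G.I) (h : G.History) : ℝ :=
  ⨅ x : ∀ j, PMF (G.A j), ⨆ y : PMF (G.A i), oneShotExp D h (Function.update x i y)

/-- The maxmin value `v̲_{O,i}(D,h)` of player `i` in the one-shot game `G_O(D,h)`. -/
noncomputable def oneShotMaxmin (D : G.History → ℝ) (i : G.I) (h : G.History) : ℝ :=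
  ⨆ y : PMF (G.A i), ⨅ x : ∀ j, PMF (G.A j), oneShotExp D h (Function.update x i y)

end StochGame

namespace StochGame

variable {G : StochGame}

/-- `D` is a Martin function with parameter `ε` for player `i` (for the minmax value):
it is bounded; `v̄_i(h) - ε ≤ D h ≤ v̄_i(h)` at every history; `D h ≤ v̄_{O,i}(D,h)` at
every history; and every strategy profile that plays well locally in all the one-shot
games from some history `h'` onwards also plays well globally from `h'` onwards. -/
def IsMartinMinmax (P : G.History → G.Profile → Measure G.Run) (ε : ℝ) (i : G.I)
    (D : G.History → ℝ) : Prop :=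
  (∃ C : ℝ, ∀ h : G.History, |D h| ≤ C) ∧
  (∀ h : G.History, Valid h → minmaxVal P i h - ε ≤ D h ∧ D h ≤ minmaxVal P i h) ∧
  (∀ h : G.History, Valid h → D h ≤ oneShotMinmax D i h) ∧
  (∀ h' : G.History, Valid h' → ∀ σ : G.Profile,
    (∀ h : G.History, Valid h → Ext h' h →
      oneShotMinmax D i h ≤ oneShotExp D h (fun j => σ j h)) →
    (∀ h : G.History, Valid h → Ext h' h →
      oneShotMinmax D i h ≤ expPay P h σ i))

/-- The mixed action profile `x` is a Nash equilibrium of the one-shot game `G_O(D,h)`: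
no player `i` can increase `E[D_i | h, ·]` by unilaterally changing her mixed action. -/
def OneShotNash (D : G.I → G.History → ℝ) (h : G.History) (x : ∀ i, PMF (G.A i)) : Prop :=
  ∀ (i : G.I) (y : PMF (G.A i)),
    oneShotExp (D i) h (Function.update x i y) ≤ oneShotExp (D i) h x

end StochGame

/-!
Since `v̄_i - δ ≤ D_i` at every history, deviating to `a_i` and then receiving `v̄_i` is worth at
most `δ` more than deviating and then receiving `D_i`, and as `σ*(h)` is a Nash equilibrium of
`G_O(D,h)` the deviation does not raise the one-shot expectation of `D_i`. At every history `σ*`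
gives player `i` at least her one-shot minmax value of `D_i`, so the Martin property yields
`D_i ≤ E_{·,σ*}[f_i]` at every history. Finally `E_{h,σ*}[f_i]` is the one-shot expectation of
the continuation payoffs `E_{(h,a,s),σ*}[f_i]`: both sides are integrals against `P_{h,σ*}`,
which agrees with `Σ_{a,s} P(a,s | h) P_{(h,a,s),σ*}` on cylinders, a π-system generating the
σ-algebra on runs.
-/

lemma abs_ciSup_le_of_forall {ι : Sort*} [Nonempty ι] {f : ι → ℝ} {C : ℝ}
    (hf : ∀ i, |f i| ≤ C) : |⨆ i, f i| ≤ C :=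
  abs_le.2 ⟨(neg_le_of_abs_le (hf (Classical.arbitrary ι))).trans
    (le_ciSup ⟨C, Set.forall_mem_range.2 fun i => le_of_abs_le (hf i)⟩ _),
    ciSup_le fun i => le_of_abs_le (hf i)⟩

lemma abs_ciInf_le_of_forall {ι : Sort*} [Nonempty ι] {f : ι → ℝ} {C : ℝ}
    (hf : ∀ i, |f i| ≤ C) : |⨅ i, f i| ≤ C :=
  abs_le.2 ⟨le_ciInf fun i => neg_le_of_abs_le (hf i),
    (ciInf_le ⟨-C, Set.forall_mem_range.2 fun i => neg_le_of_abs_le (hf i)⟩ _).trans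
      (le_of_abs_le (hf (Classical.arbitrary ι)))⟩

namespace PMF

variable {α : Type*} (p : PMF α)

lemma tsum_toReal : ∑' a, (p a).toReal = 1 := by
  rw [← ENNReal.tsum_toReal_eq p.apply_ne_top, p.tsum_coe, ENNReal.toReal_one]

lemma summable_toReal_mul {g : α → ℝ} {M : ℝ} (hg : ∀ a, |g a| ≤ M) :
    Summable fun a => (p a).toReal * g a := by
  refine ((ENNReal.summable_toReal (p.tsum_coe ▸ ENNReal.one_ne_top)).mul_right M).of_norm_bounded
    fun a => ?_
  rw [norm_mul, Real.norm_of_nonneg ENNReal.toReal_nonneg, Real.norm_eq_abs]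
  exact mul_le_mul_of_nonneg_left (hg a) ENNReal.toReal_nonneg

lemma tsum_toReal_mul_const (c : ℝ) : ∑' a, (p a).toReal * c = c := by
  rw [tsum_mul_right, p.tsum_toReal, one_mul]

lemma tsum_toReal_mul_mono {g₁ g₂ : α → ℝ} {M₁ M₂ : ℝ} (hg₁ : ∀ a, |g₁ a| ≤ M₁)
    (hg₂ : ∀ a, |g₂ a| ≤ M₂) (h : ∀ a, p a ≠ 0 → g₁ a ≤ g₂ a) :
    ∑' a, (p a).toReal * g₁ a ≤ ∑' a, (p a).toReal * g₂ a := by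
  refine (p.summable_toReal_mul hg₁).tsum_mono (p.summable_toReal_mul hg₂) fun a => ?_
  rcases eq_or_ne (p a) 0 with ha | ha
  · simp [ha]
  · exact mul_le_mul_of_nonneg_left (h a ha) ENNReal.toReal_nonneg

lemma abs_tsum_toReal_mul_le {g : α → ℝ} {M : ℝ} (hg : ∀ a, |g a| ≤ M) :
    |∑' a, (p a).toReal * g a| ≤ M := by
  have hM : ∀ a : α, |M| ≤ |M| := fun _ => le_rfl
  have hnegM : ∀ a : α, |-M| ≤ |M| := fun _ => (abs_neg M).le
  refine abs_le.2 ⟨?_, ?_⟩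
  · simpa only [p.tsum_toReal_mul_const] using
      p.tsum_toReal_mul_mono hnegM hg fun a _ => (abs_le.1 (hg a)).1
  · simpa only [p.tsum_toReal_mul_const] using
      p.tsum_toReal_mul_mono hg hM fun a _ => (abs_le.1 (hg a)).2

lemma tsum_toReal_mul_add_const {g : α → ℝ} {M : ℝ} (hg : ∀ a, |g a| ≤ M) (c : ℝ) :
    ∑' a, (p a).toReal * (g a + c) = ∑' a, (p a).toReal * g a + c := by
  simp only [mul_add]
  rw [(p.summable_toReal_mul hg).tsum_add (p.summable_toReal_mul fun _ => le_refl |c|),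
    p.tsum_toReal_mul_const]

variable {ι : Type*} [Fintype ι] {β : ι → Type*} [∀ j, Fintype (β j)]

lemma sum_prod_apply (x : ∀ j, PMF (β j)) : ∑ a : ∀ j, β j, ∏ j, x j (a j) = 1 := by
  rw [← Fintype.prod_sum]
  exact Finset.prod_eq_one fun j _ => by rw [← tsum_fintype (L := .unconditional _), (x j).tsum_coe]

lemma sum_prod_toReal (x : ∀ j, PMF (β j)) : ∑ a : ∀ j, β j, ∏ j, (x j (a j)).toReal = 1 := by
  simp_rw [← ENNReal.toReal_prod]
  rw [← ENNReal.toReal_sum fun a _ => ENNReal.prod_ne_top fun j _ => (x j).apply_ne_top _,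
    sum_prod_apply, ENNReal.toReal_one]

end PMF

namespace StochGame

variable {G : StochGame}

lemma ext_refl (h : G.History) : Ext h h := ⟨rfl, List.prefix_refl _⟩

lemma ext_trans {h₁ h₂ h₃ : G.History} (h₁₂ : Ext h₁ h₂) (h₂₃ : Ext h₂ h₃) : Ext h₁ h₃ :=
  ⟨h₁₂.1.trans h₂₃.1, h₁₂.2.trans h₂₃.2⟩

lemma ext_snocH (h : G.History) (a : G.ActionProfile) (s : G.S) : Ext h (snocH h a s) :=
  ⟨rfl, List.prefix_append _ _⟩

lemma ext_catH (h : G.History) (l : List (G.ActionProfile × G.S)) : Ext h (catH h l) :=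
  ⟨rfl, List.prefix_append _ _⟩

lemma catH_snocH (h : G.History) (a : G.ActionProfile) (s : G.S)
    (l : List (G.ActionProfile × G.S)) : catH (snocH h a s) l = catH h ((a, s) :: l) := by
  simp [catH, snocH]

lemma exists_eq_catH_snocH_of_ext {h g : G.History} (hhg : Ext h g) (hgh : ¬ Ext g h) :
    ∃ a s l, g = catH (snocH h a s) l := by
  obtain ⟨l, hl⟩ := hhg.2
  cases l with
  | nil => exact absurd ⟨hhg.1.symm, by simp [← hl]⟩ hgh
  | cons as l =>
    exact ⟨as.1, as.2, l, by rw [catH_snocH]; exact Prod.ext hhg.1.symm hl.symm⟩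

lemma lastState_cons (s t : G.S) (a : G.ActionProfile) (l : List (G.ActionProfile × G.S)) :
    lastState ((s, (a, t) :: l) : G.History) = lastState ((t, l) : G.History) := by
  simp only [lastState, List.getLast?_cons]
  cases l.getLast? <;> rfl

lemma validFrom_append_singleton (a : G.ActionProfile) (t : G.S) :
    ∀ (s : G.S) (l : List (G.ActionProfile × G.S)), G.ValidFrom s l →
      G.trans (lastState ((s, l) : G.History)) a t ≠ 0 → G.ValidFrom s (l ++ [(a, t)])
  | _, [], _, hne => ⟨hne, trivial⟩
  | s, (b, u) :: l, hval, hne =>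
    ⟨hval.1, validFrom_append_singleton a t u l hval.2 (lastState_cons s u b l ▸ hne)⟩

lemma Valid.snocH {h : G.History} (hv : Valid h) {a : G.ActionProfile} {s : G.S}
    (hs : G.trans (lastState h) a s ≠ 0) : Valid (snocH h a s) :=
  validFrom_append_singleton a s h.1 h.2 hv hs

lemma mem_cyl {r : G.Run} {g : G.History} :
    r ∈ cyl g ↔ r.1 = g.1 ∧ ∀ k, (hk : k < g.2.length) → r.2 k = g.2[k] := by
  simp [cyl, List.get_eq_getElem]

lemma cyl_subset_of_ext {h g : G.History} (hext : Ext h g) : cyl g ⊆ cyl h := by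
  intro r hr
  rw [mem_cyl] at hr ⊢
  refine ⟨hr.1.trans hext.1.symm, fun k hk => ?_⟩
  rw [hr.2 k (hk.trans_le hext.2.length_le)]
  exact (hext.2.getElem hk).symm

lemma ext_or_ext_of_mem_cyl {r : G.Run} {g₁ g₂ : G.History} (h₁ : r ∈ cyl g₁)
    (h₂ : r ∈ cyl g₂) : Ext g₁ g₂ ∨ Ext g₂ g₁ := by
  rw [mem_cyl] at h₁ h₂
  have prefix_of_le : ∀ p q : G.History, p.2.length ≤ q.2.length →
      (∀ k, (hk : k < p.2.length) → r.2 k = p.2[k]) →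
      (∀ k, (hk : k < q.2.length) → r.2 k = q.2[k]) → p.2 <+: q.2 := by
    intro p q hlen hp hq
    rw [List.prefix_iff_eq_take]
    refine List.ext_getElem (by simp [hlen]) fun n hn _ => ?_
    rw [List.getElem_take, ← hp n hn, hq n (hn.trans_le hlen)]
  rcases le_total g₁.2.length g₂.2.length with hl | hl
  · exact Or.inl ⟨h₁.1.symm.trans h₂.1, prefix_of_le g₁ g₂ hl h₁.2 h₂.2⟩
  · exact Or.inr ⟨h₂.1.symm.trans h₁.1, prefix_of_le g₂ g₁ hl h₂.2 h₁.2⟩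

lemma disjoint_cyl_of_not_ext {g h : G.History} (hgh : ¬ Ext g h) (hhg : ¬ Ext h g) :
    Disjoint (cyl g) (cyl h) :=
  Set.disjoint_left.2 fun _ hg hh => (ext_or_ext_of_mem_cyl hg hh).elim hgh hhg

lemma disjoint_cyl_snocH {h : G.History} {a b : G.ActionProfile} {s t : G.S}
    (hne : (a, s) ≠ (b, t)) : Disjoint (cyl (snocH h a s)) (cyl (snocH h b t)) := by
  have not_ext : ∀ {a b : G.ActionProfile} {s t : G.S}, (a, s) ≠ (b, t) →
      ¬ Ext (snocH h a s) (snocH h b t) := fun hne hext => by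
    have := List.prefix_append_right_inj _ |>.1 hext.2
    exact hne (List.cons_prefix_cons.1 this).1
  exact disjoint_cyl_of_not_ext (not_ext hne) (not_ext hne.symm)

lemma measurableSet_cyl (g : G.History) : MeasurableSet (cyl g) := by
  have hcyl : cyl g = Prod.fst ⁻¹' {g.1} ∩
      ⋂ k : Fin g.2.length, (fun r : G.Run => r.2 k) ⁻¹' {g.2.get k} := by
    ext r
    simp only [cyl, Set.mem_ofPred_eq, Set.mem_inter_iff, Set.mem_preimage,
      Set.mem_singleton_iff, Set.mem_iInter]
    exact and_congr Iff.rfl ⟨fun H k => H k.1 k.2, fun H k hk => H ⟨k, hk⟩⟩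
  rw [hcyl]
  exact (measurable_fst (MeasurableSet.singleton _)).inter <| MeasurableSet.iInter fun k =>
    ((measurable_pi_apply _).comp measurable_snd) (MeasurableSet.singleton _)

lemma isPiSystem_range_cyl : IsPiSystem (Set.range (cyl : G.History → Set G.Run)) := by
  rintro _ ⟨g₁, rfl⟩ _ ⟨g₂, rfl⟩ ⟨r, hr₁, hr₂⟩
  rcases ext_or_ext_of_mem_cyl hr₁ hr₂ with hext | hext
  · exact ⟨g₂, (Set.inter_eq_right.2 (cyl_subset_of_ext hext)).symm⟩
  · exact ⟨g₁, (Set.inter_eq_left.2 (cyl_subset_of_ext hext)).symm⟩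

lemma setOf_run_apply_eq (k : ℕ) (c : G.ActionProfile × G.S) :
    {r : G.Run | r.2 k = c} =
      ⋃ (s : G.S) (v : Fin k → G.ActionProfile × G.S),
        cyl ((s, List.ofFn v ++ [c]) : G.History) := by
  ext r
  simp only [Set.mem_ofPred_eq, Set.mem_iUnion, mem_cyl]
  constructor
  · refine fun hr => ⟨r.1, fun j => r.2 j, rfl, fun m hm => ?_⟩
    rcases (Nat.lt_succ_iff.1 (by simpa using hm)).lt_or_eq with hmk | rfl
    · rw [List.getElem_append_left (by simpa using hmk), List.getElem_ofFn]
    · simpa [List.getElem_append_right] using hr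
  · rintro ⟨s, v, -, hv⟩
    simpa using hv k (by simp)

lemma generateFrom_range_cyl :
    MeasurableSpace.generateFrom (Set.range (cyl : G.History → Set G.Run)) =
      (inferInstance : MeasurableSpace G.Run) := by
  refine le_antisymm (MeasurableSpace.generateFrom_le ?_) ?_
  · rintro _ ⟨g, rfl⟩
    exact measurableSet_cyl g
  -- from here on, measurability refers to the σ-algebra generated by the cylinders
  let _ := MeasurableSpace.generateFrom (Set.range (cyl : G.History → Set G.Run))
  have measurable_cyl : ∀ g : G.History, MeasurableSet (cyl g) :=
    fun g => MeasurableSpace.measurableSet_generateFrom (Set.mem_range_self g)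
  have hfst : Measurable (Prod.fst : G.Run → G.S) := measurable_to_countable' fun s => by
    convert measurable_cyl ((s, []) : G.History)
    ext r
    simp [cyl]
  have hsnd : Measurable (Prod.snd : G.Run → ℕ → G.ActionProfile × G.S) :=
    measurable_pi_iff.2 fun k => measurable_to_countable' fun c => by
      rw [show (fun r : G.Run => r.2 k) ⁻¹' {c} = {r | r.2 k = c} from rfl, setOf_run_apply_eq]
      exact MeasurableSet.iUnion fun s => MeasurableSet.iUnion fun v => measurable_cyl _
  exact fun t ht => hfst.prodMk hsnd ht

section OneShot

variable {D D₁ D₂ : G.History → ℝ} {M M₁ M₂ : ℝ}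

lemma abs_oneShotExp_le (hD : ∀ g, |D g| ≤ M) (h : G.History) (x : ∀ j, PMF (G.A j)) :
    |oneShotExp D h x| ≤ M := by
  calc |oneShotExp D h x|
      ≤ ∑ a : G.ActionProfile, (∏ j, (x j (a j)).toReal) *
          |∑' s, (G.trans (lastState h) a s).toReal * D (snocH h a s)| := by
        refine (Finset.abs_sum_le_sum_abs _ _).trans_eq (Finset.sum_congr rfl fun a _ => ?_)
        rw [abs_mul, abs_of_nonneg (by positivity)]
    _ ≤ ∑ a : G.ActionProfile, (∏ j, (x j (a j)).toReal) * M := by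
        gcongr with a
        exact (G.trans _ a).abs_tsum_toReal_mul_le fun s => hD _
    _ = M := by rw [← Finset.sum_mul, PMF.sum_prod_toReal, one_mul]

lemma oneShotExp_mono (hD₁ : ∀ g, |D₁ g| ≤ M₁) (hD₂ : ∀ g, |D₂ g| ≤ M₂) (h : G.History)
    (hle : ∀ a s, G.trans (lastState h) a s ≠ 0 → D₁ (snocH h a s) ≤ D₂ (snocH h a s))
    (x : ∀ j, PMF (G.A j)) : oneShotExp D₁ h x ≤ oneShotExp D₂ h x := by
  refine Finset.sum_le_sum fun a _ => mul_le_mul_of_nonneg_left ?_ (by positivity)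
  exact (G.trans _ a).tsum_toReal_mul_mono (fun s => hD₁ _) (fun s => hD₂ _) (hle a)

lemma oneShotExp_add_const (hD : ∀ g, |D g| ≤ M) (c : ℝ) (h : G.History)
    (x : ∀ j, PMF (G.A j)) : oneShotExp (fun g => D g + c) h x = oneShotExp D h x + c := by
  have inner : ∀ a, ∑' s, (G.trans (lastState h) a s).toReal * (D (snocH h a s) + c) =
      ∑' s, (G.trans (lastState h) a s).toReal * D (snocH h a s) + c :=
    fun a => (G.trans _ a).tsum_toReal_mul_add_const (fun s => hD _) c
  simp only [oneShotExp, inner]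
  rw [Finset.sum_congr rfl fun a _ => mul_add _ _ c, Finset.sum_add_distrib, ← Finset.sum_mul,
    PMF.sum_prod_toReal, one_mul]

lemma oneShotExp_update_pure (V : G.History → ℝ) (h : G.History) (x : ∀ j, PMF (G.A j))
    (i : G.I) (ai : G.A i) :
    oneShotExp V h (Function.update x i (PMF.pure ai)) =
      ∑ a : G.ActionProfile, if a i = ai then
        (∏ j ∈ Finset.univ.erase i, (x j (a j)).toReal) *
          ∑' s, (G.trans (lastState h) a s).toReal * V (snocH h a s)
      else 0 := by
  refine Finset.sum_congr rfl fun a _ => ?_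
  rw [← Finset.mul_prod_erase _ _ (Finset.mem_univ i), Function.update_self, PMF.pure_apply,
    Finset.prod_congr rfl fun j hj => by rw [Function.update_of_ne (Finset.ne_of_mem_erase hj)]]
  split_ifs <;> simp

lemma oneShotMinmax_le_of_forall_update_le (hD : ∀ g, |D g| ≤ M) {h : G.History} {i : G.I}
    {x : ∀ j, PMF (G.A j)}
    (hx : ∀ y : PMF (G.A i), oneShotExp D h (Function.update x i y) ≤ oneShotExp D h x) :
    oneShotMinmax D i h ≤ oneShotExp D h x := by
  have hbound := abs_oneShotExp_le hD h
  refine (ciInf_le ⟨-M, ?_⟩ x).trans (ciSup_le hx)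
  rintro _ ⟨x', rfl⟩
  calc -M ≤ oneShotExp D h (Function.update x' i (x' i)) := by
        rw [Function.update_eq_self]; exact neg_le_of_abs_le (hbound _)
    _ ≤ _ := le_ciSup ⟨M, Set.forall_mem_range.2 fun y => le_of_abs_le (hbound _)⟩ (x' i)

end OneShot

noncomputable def stepProb (σ : G.Profile) (h : G.History) (as : G.ActionProfile × G.S) : ℝ≥0∞ :=
  (∏ j, σ j h (as.1 j)) * G.trans (lastState h) as.1 as.2

lemma tsum_stepProb (σ : G.Profile) (h : G.History) : ∑' as, stepProb σ h as = 1 := by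
  rw [ENNReal.tsum_prod (f := fun a s => stepProb σ h (a, s)), tsum_fintype (L := .unconditional _)]
  simp only [stepProb, ENNReal.tsum_mul_left, PMF.tsum_coe, mul_one]
  exact PMF.sum_prod_apply fun j => σ j h

section InducedFamily

variable {P : G.History → G.Profile → Measure G.Run} (hP : IsInducedFamily G P)
include hP

lemma measure_cyl_self (h : G.History) (σ : G.Profile) : P h σ (cyl h) = 1 := by
  simpa [catH, contProb] using hP.2 h σ []

lemma measure_cyl_of_ext {g h : G.History} (hext : Ext g h) (σ : G.Profile) :
    P h σ (cyl g) = 1 :=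
  haveI := hP.1 h σ
  le_antisymm prob_le_one <| (measure_cyl_self hP h σ).symm.trans_le <|
    measure_mono (cyl_subset_of_ext hext)

lemma measure_cyl_of_disjoint {g h : G.History} (hd : Disjoint (cyl g) (cyl h))
    (σ : G.Profile) : P h σ (cyl g) = 0 :=
  haveI := hP.1 h σ
  measure_mono_null hd.subset_compl_right <|
    (prob_compl_eq_zero_iff (measurableSet_cyl h)).2 (measure_cyl_self hP h σ)

lemma measure_cyl_catH_snocH (h : G.History) (σ : G.Profile) (a : G.ActionProfile) (s : G.S)
    (l : List (G.ActionProfile × G.S)) :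
    P h σ (cyl (catH (snocH h a s) l)) =
      stepProb σ h (a, s) * P (snocH h a s) σ (cyl (catH (snocH h a s) l)) := by
  rw [hP.2, catH_snocH, hP.2, contProb, stepProb]

lemma measure_cyl_eq_tsum (h g : G.History) (σ : G.Profile) :
    P h σ (cyl g) = ∑' as, stepProb σ h as * P (snocH h as.1 as.2) σ (cyl g) := by
  by_cases hgh : Ext g h
  · simp only [measure_cyl_of_ext hP hgh, fun as : G.ActionProfile × G.S =>
      measure_cyl_of_ext hP (ext_trans hgh (ext_snocH h as.1 as.2)), mul_one, tsum_stepProb]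
  by_cases hhg : Ext h g
  · obtain ⟨a, s, l, rfl⟩ := exists_eq_catH_snocH_of_ext hhg hgh
    rw [tsum_eq_single (a, s), measure_cyl_catH_snocH hP]
    refine fun as hne => mul_eq_zero_of_right _ (measure_cyl_of_disjoint hP ?_ σ)
    exact (disjoint_cyl_snocH (h := h) (Ne.symm hne)).mono_left
      (cyl_subset_of_ext (ext_catH _ l))
  · have hd := disjoint_cyl_of_not_ext hgh hhg
    simp only [measure_cyl_of_disjoint hP hd, fun as : G.ActionProfile × G.S =>
      measure_cyl_of_disjoint hP (hd.mono_right (cyl_subset_of_ext (ext_snocH h as.1 as.2))),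
      mul_zero, tsum_zero]

lemma measure_eq_sum_stepProb (h : G.History) (σ : G.Profile) :
    P h σ = Measure.sum fun as => stepProb σ h as • P (snocH h as.1 as.2) σ := by
  have sum_measure_apply : ∀ t, MeasurableSet t → (Measure.sum fun as => stepProb σ h as •
      P (snocH h as.1 as.2) σ) t = ∑' as, stepProb σ h as * P (snocH h as.1 as.2) σ t :=
    fun t ht => by simp [Measure.sum_apply _ ht]
  have := hP.1 h σ
  refine ext_of_generate_finite _ generateFrom_range_cyl.symm isPiSystem_range_cyl ?_ ?_
  · rintro _ ⟨g, rfl⟩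
    rw [sum_measure_apply _ (measurableSet_cyl g), measure_cyl_eq_tsum hP]
  · simp only [sum_measure_apply _ MeasurableSet.univ, fun as : G.ActionProfile × G.S =>
      (hP.1 (snocH h as.1 as.2) σ).measure_univ, mul_one, tsum_stepProb, measure_univ]

end InducedFamily

section Payoff

variable {P : G.History → G.Profile → Measure G.Run} (hP : IsInducedFamily G P) {i : G.I}
  {C : ℝ} (hf : ∀ r, |G.payoff i r| ≤ C)
include hP hf

lemma abs_expPay_le (g : G.History) (σ : G.Profile) : |expPay P g σ i| ≤ C := by
  have := hP.1 g σ
  simpa [expPay] using norm_integral_le_of_norm_le_const (μ := P g σ)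
    (Filter.Eventually.of_forall fun r => (Real.norm_eq_abs (G.payoff i r)).trans_le (hf r))

lemma abs_minmaxVal_le (g : G.History) : |minmaxVal P i g| ≤ C :=
  abs_ciInf_le_of_forall fun _ => abs_ciSup_le_of_forall fun _ => abs_expPay_le hP hf g _

lemma expPay_eq_oneShotExp (hfm : Measurable (G.payoff i)) (h : G.History) (σ : G.Profile) :
    expPay P h σ i = oneShotExp (fun g => expPay P g σ i) h (fun j => σ j h) := by
  have := hP.1 h σ
  have hint : Integrable (G.payoff i) (P h σ) :=
    (integrable_const C).mono' hfm.aestronglyMeasurable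
      (Filter.Eventually.of_forall fun r => (Real.norm_eq_abs _).trans_le (hf r))
  have hsplit : expPay P h σ i =
      ∑' as, (stepProb σ h as).toReal * expPay P (snocH h as.1 as.2) σ i := by
    rw [expPay, measure_eq_sum_stepProb hP, integral_sum_measure
      (measure_eq_sum_stepProb hP h σ ▸ hint)]
    simp only [integral_smul_measure, smul_eq_mul, expPay]
  have hsumm : Summable fun as => (stepProb σ h as).toReal * expPay P (snocH h as.1 as.2) σ i := by
    refine (ENNReal.summable_toReal (by rw [tsum_stepProb σ h]; exact ENNReal.one_ne_top)
      |>.mul_right C).of_norm_bounded fun as => ?_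
    rw [norm_mul, Real.norm_of_nonneg ENNReal.toReal_nonneg, Real.norm_eq_abs]
    exact mul_le_mul_of_nonneg_left (abs_expPay_le hP hf _ σ) ENNReal.toReal_nonneg
  rw [hsplit, hsumm.tsum_prod' hsumm.prod_factor, tsum_fintype (L := .unconditional _)]
  refine Finset.sum_congr rfl fun a _ => ?_
  rw [← tsum_mul_left]
  refine tsum_congr fun s => ?_
  rw [stepProb, ENNReal.toReal_mul, ENNReal.toReal_prod, mul_assoc]

end Payoff

lemma IsMartinMinmax.le_expPay {P : G.History → G.Profile → Measure G.Run} {ε : ℝ} {i : G.I}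
    {D : G.History → ℝ} (hD : IsMartinMinmax P ε i D) {σ : G.Profile}
    (hσ : ∀ g, Valid g → oneShotMinmax D i g ≤ oneShotExp D g (fun j => σ j g))
    {g : G.History} (hg : Valid g) : D g ≤ expPay P g σ i :=
  (hD.2.2.1 g hg).trans (hD.2.2.2 g hg σ (fun g' hg' _ => hσ g' hg') g hg (ext_refl g))

end StochGame

namespace StochGame

theorem one_stage_deviation_bound_general (G : StochGame)
    (P : G.History → G.Profile → Measure G.Run) (hP : IsInducedFamily G P)
    (hfm : ∀ i, Measurable (G.payoff i))
    (hfb : ∀ i, ∃ C : ℝ, ∀ r : G.Run, |G.payoff i r| ≤ C)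
    (δ : ℝ)
    (D : G.I → G.History → ℝ) (hD : ∀ i, IsMartinMinmax P δ i (D i))
    (σstar : G.Profile)
    (hσstar : ∀ h : G.History, Valid h → OneShotNash D h (fun j => σstar j h))
    (h : G.History) (hv : Valid h) (i : G.I) (ai : G.A i) :
    (∑ a : G.ActionProfile, if a i = ai then
        (∏ j ∈ Finset.univ.erase i, (σstar j h (a j)).toReal) *
          ∑' s : G.S, (G.trans (lastState h) a s).toReal * minmaxVal P i (snocH h a s)
      else 0)
      ≤ expPay P h σstar i + 2 * δ := by
  obtain ⟨C, hC⟩ := (hD i).1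
  obtain ⟨Cf, hCf⟩ := hfb i
  have hδ : 0 ≤ δ := by linarith [(hD i).2.1 h hv]
  have hminmax_le : ∀ g, Valid g → minmaxVal P i g ≤ D i g + δ := fun g hg => by
    linarith [((hD i).2.1 g hg).1]
  have hD_le_expPay : ∀ g, Valid g → D i g ≤ expPay P g σstar i := fun g =>
    (hD i).le_expPay fun g' hg' => oneShotMinmax_le_of_forall_update_le hC (hσstar g' hg' i)
  have hD_add : ∀ g, |D i g + δ| ≤ C + |δ| := fun g => (abs_add_le _ _).trans (by linarith [hC g])
  rw [← oneShotExp_update_pure]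
  set x := fun j => σstar j h
  set dev := Function.update x i (PMF.pure ai)
  calc oneShotExp (minmaxVal P i) h dev
      ≤ oneShotExp (fun g => D i g + δ) h dev := oneShotExp_mono (abs_minmaxVal_le hP hCf)
        hD_add h (fun a s hs => hminmax_le _ (hv.snocH hs)) dev
    _ = oneShotExp (D i) h dev + δ := oneShotExp_add_const hC δ h dev
    _ ≤ oneShotExp (D i) h x + δ := by gcongr; exact hσstar h hv i _
    _ ≤ oneShotExp (fun g => expPay P g σstar i) h x + δ := by
        gcongr
        exact oneShotExp_mono hC (abs_expPay_le hP hCf · σstar) h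
          (fun a s hs => hD_le_expPay _ (hv.snocH hs)) x
    _ = expPay P h σstar i + δ := by rw [← expPay_eq_oneShotExp hP hCf (hfm i)]
    _ ≤ expPay P h σstar i + 2 * δ := by linarith

/-- **Theorem (one-stage deviations followed by punishment at the minmax level).**
Let `δ > 0`, let `D_i` be a Martin function for the minmax value for each player `i`, and
let `σ*` play a Nash equilibrium of the one-shot game `G_O(D,h)` at every history `h`.
Then for every history `h`, every player `i` and every action `a_i` of player `i`:
`Σ_{a_{-i}} σ*_{-i}(a_{-i}|h) Σ_s p(s | s_h, a_i, a_{-i}) v̄_i(h,(a_i,a_{-i}),s)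
  ≤ E_{h,σ*}[f_i] + 2δ`. -/
theorem one_stage_deviation_bound (G : StochGame)
    (P : G.History → G.Profile → Measure G.Run) (hP : IsInducedFamily G P)
    (hfm : ∀ i, Measurable (G.payoff i))
    (hfb : ∀ i, ∃ C : ℝ, ∀ r : G.Run, |G.payoff i r| ≤ C)
    (δ : ℝ) (hδ : 0 < δ)
    (D : G.I → G.History → ℝ) (hD : ∀ i, IsMartinMinmax P δ i (D i))
    (σstar : G.Profile)
    (hσstar : ∀ h : G.History, Valid h → OneShotNash D h (fun j => σstar j h))
    (h : G.History) (hv : Valid h) (i : G.I) (ai : G.A i) :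
    (∑ a : G.ActionProfile, if a i = ai then
        (∏ j ∈ Finset.univ.erase i, (σstar j h (a j)).toReal) *
          ∑' s : G.S, (G.trans (lastState h) a s).toReal * minmaxVal P i (snocH h a s)
      else 0)
      ≤ expPay P h σstar i + 2 * δ :=
  one_stage_deviation_bound_general G P hP hfm hfb δ D hD σstar hσstar h hv i ai

end StochGame
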